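/- Consider the PRA loss of the softmax-parametrized policy under the Bradley–Terry comparison model: with p*(x,y₁,y₂) = σ(r(x,y₁) − r(x,y₂)), h_θ(x,y₁,y₂) = (1/τ)·log(π_θ(y₁|x)/π_θ(y₂|x)) and model probability p_θ(x,y₁,y₂) = σ(h_θ(x,y₁,y₂)), define L(θ) = Σ_{x∈X} 𝒟(x) · Σ_{y₁,y₂∈Y} π_θ(y₁|x)·π_θ(y₂|x) · [p*(x,y₁,y₂)·log(p*(x,y₁,y₂)/p_θ(x,y₁,y₂)) + (1 − p*(x,y₁,y₂))·log((1 − p*(x,y₁,y₂))/(1 − p_θ(x,y₁,y₂)))]. Let d ≥ 0 and ε₃ ≥ 0, and suppose θ satisfies |θ(x₁,y₁) − θ(x₂,y₂)| ≤ d for all x₁, x₂ ∈ X and y₁, y₂ ∈ Y, and |p*(x,y₁,y₂) − p_θ(x,y₁,y₂)| ≤ ε₃ for all x, y₁, y₂. Then the second derivative of L at θ satisfies |D²L(θ)(z,z)| ≤ (20·log(1 + e^{d/τ}) + 16·ε₃/τ + 4/τ² + 16·log 2)·Σ_{x,y} z(x,y)² for every direction z : X × Y → ℝ. -/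

import Mathlib

/-!
Fix a direction `z` and a context `x`, and write `w = z(x, ·)`. Along the line `θ + t • z` the loss
at `x` is an average, under the product of the softmax weights, of the Bernoulli divergence
`klSigmoid p* h` with `h = (θ(x,y₁) - θ(x,y₂))/τ`. Differentiating the weights multiplies the
integrand by the centred velocity `w y₁ + w y₂ - 2·mean w`, of size at most `4‖w‖∞`, and the mean
itself moves at speed at most `2‖w‖∞²`. As a function of the logit, the divergence has derivative
`σ(h) - p*` (at most `ε₃` at `θ`) and second derivative `σ(h)(1 - σ(h)) ≤ 1/4`, and it is bounded
by `log (1 + exp |h|)` since the binary entropy lies in `[0, log 2]`. Collecting terms gives the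
bound `(20 log (1 + e^{d/τ}) + 16 ε₃/τ + 1/τ²) ‖z‖∞²`, and `‖z‖∞² ≤ Σ z²`.
-/

open Real Finset

lemma hasDerivAt_line {E : Type*} [NormedAddCommGroup E] [NormedSpace ℝ E] (θ z : E) (t : ℝ) :
    HasDerivAt (fun t : ℝ => θ + t • z) z t := by
  simpa using ((hasDerivAt_id t).smul_const z).const_add θ

theorem fderiv_fderiv_apply_eq_of_hasDerivAt_line {E F : Type*} [NormedAddCommGroup E]
    [NormedSpace ℝ E] [NormedAddCommGroup F] [NormedSpace ℝ F] {f : E → F} (hf : ContDiff ℝ 2 f)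
    {θ z : E} {φ₁ : ℝ → F} {c : F} (h₁ : ∀ t, HasDerivAt (fun t : ℝ => f (θ + t • z)) (φ₁ t) t)
    (h₂ : HasDerivAt φ₁ c 0) : fderiv ℝ (fderiv ℝ f) θ z z = c := by
  have hφ₁ : φ₁ = fun t => fderiv ℝ f (θ + t • z) z := funext fun t =>
    (h₁ t).unique <| (hf.differentiable two_ne_zero _).hasFDerivAt.comp_hasDerivAt t
      (hasDerivAt_line θ z t)
  have hf' : DifferentiableAt ℝ (fderiv ℝ f) θ :=
    (hf.fderiv_right (m := 1) le_rfl).differentiable one_ne_zero θ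
  have hθ : θ + (0 : ℝ) • z = θ := by simp
  refine HasDerivAt.unique ?_ (hφ₁ ▸ h₂)
  have := (hθ ▸ hf'.hasFDerivAt).comp_hasDerivAt (0 : ℝ) (hasDerivAt_line θ z 0)
  simpa [hθ] using this.clm_apply (hasDerivAt_const (0 : ℝ) z)

noncomputable def softplus (x : ℝ) : ℝ := log (1 + exp x)

/-- The Kullback–Leibler divergence of `Bernoulli (sigmoid x)` from `Bernoulli s`. -/
noncomputable def klSigmoid (s x : ℝ) : ℝ :=
  s * log (s / sigmoid x) + (1 - s) * log ((1 - s) / (1 - sigmoid x))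

lemma softplus_zero : softplus 0 = log 2 := by norm_num [softplus]

lemma softplus_nonneg (x : ℝ) : 0 ≤ softplus x :=
  log_nonneg (by linarith [exp_pos x])

lemma softplus_mono : Monotone softplus := fun _ _ h =>
  log_le_log (by positivity) (by linarith [exp_le_exp.2 h])

lemma hasDerivAt_softplus (x : ℝ) : HasDerivAt softplus (sigmoid x) x := by
  refine ((hasDerivAt_exp x).const_add 1).log (by positivity) |>.congr_deriv ?_
  rw [sigmoid_def, exp_neg]
  field_simp
  ring

lemma contDiff_softplus {n : WithTop ℕ∞} : ContDiff ℝ n softplus :=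
  (contDiff_const.add contDiff_exp).log fun x => by positivity

lemma log_sigmoid (x : ℝ) : log (sigmoid x) = -softplus (-x) := by
  rw [sigmoid_def, log_inv, softplus]

lemma log_one_sub_sigmoid (x : ℝ) : log (1 - sigmoid x) = -softplus x := by
  rw [← sigmoid_neg, log_sigmoid, neg_neg]

lemma sigmoid_mul_one_sub_le (x : ℝ) : sigmoid x * (1 - sigmoid x) ≤ 1 / 4 := by
  nlinarith [sq_nonneg (sigmoid x - 1 / 2)]

lemma mul_log_div_of_ne_zero {s q : ℝ} (hq : q ≠ 0) :
    s * log (s / q) = s * log s - s * log q := by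
  rcases eq_or_ne s 0 with rfl | hs
  · simp
  · rw [log_div hs hq, mul_sub]

lemma klSigmoid_eq (s x : ℝ) :
    klSigmoid s x = -binEntropy s + s * softplus (-x) + (1 - s) * softplus x := by
  rw [klSigmoid, mul_log_div_of_ne_zero (sigmoid_pos x).ne',
    mul_log_div_of_ne_zero (sub_pos.2 (sigmoid_lt_one x)).ne', log_sigmoid, log_one_sub_sigmoid,
    binEntropy, log_inv, log_inv]
  ring

lemma hasDerivAt_klSigmoid (s x : ℝ) : HasDerivAt (klSigmoid s) (sigmoid x - s) x := by
  rw [show klSigmoid s = fun x => -binEntropy s + s * softplus (-x) + (1 - s) * softplus x from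
    funext (klSigmoid_eq s)]
  refine (((hasDerivAt_softplus (-x)).comp x (hasDerivAt_neg x)).const_mul s).const_add _ |>.add
    ((hasDerivAt_softplus x).const_mul (1 - s)) |>.congr_deriv ?_
  rw [sigmoid_neg]
  ring

lemma contDiff_klSigmoid {n : WithTop ℕ∞} (s : ℝ) : ContDiff ℝ n (klSigmoid s) := by
  simp_rw [funext (klSigmoid_eq s)]
  exact (contDiff_const.add (contDiff_const.mul (contDiff_softplus.comp contDiff_neg))).add
    (contDiff_const.mul contDiff_softplus)

lemma abs_klSigmoid_le {s : ℝ} (hs₀ : 0 ≤ s) (hs₁ : s ≤ 1) (x : ℝ) :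
    |klSigmoid s x| ≤ softplus |x| := by
  have hH₀ := binEntropy_nonneg hs₀ hs₁
  have hH₁ := binEntropy_le_log_two (p := s)
  have h2 : log 2 ≤ softplus |x| := softplus_zero ▸ softplus_mono (abs_nonneg x)
  have hneg : softplus (-x) ≤ softplus |x| := softplus_mono (neg_le_abs x)
  have hpos : softplus x ≤ softplus |x| := softplus_mono (le_abs_self x)
  have := softplus_nonneg x
  have := softplus_nonneg (-x)
  rw [klSigmoid_eq, abs_le]
  constructor <;> nlinarith

noncomputable def softmax {Y : Type*} [Fintype Y] (v : Y → ℝ) (y : Y) : ℝ :=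
  exp (v y) / ∑ y', exp (v y')

noncomputable def pairExpect {Y : Type*} [Fintype Y] (p : Y → ℝ) (f : Y → Y → ℝ) : ℝ :=
  ∑ y₁, ∑ y₂, p y₁ * p y₂ * f y₁ y₂

section Softmax

variable {Y : Type*} [Fintype Y]

lemma abs_sum_mul_le_of_sum_eq_one {p f : Y → ℝ} {M : ℝ} (hp₀ : ∀ y, 0 ≤ p y)
    (hp₁ : ∑ y, p y = 1) (hf : ∀ y, |f y| ≤ M) : |∑ y, p y * f y| ≤ M := by
  calc |∑ y, p y * f y| ≤ ∑ y, p y * M := by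
        refine (abs_sum_le_sum_abs _ _).trans (sum_le_sum fun y _ => ?_)
        rw [abs_mul, abs_of_nonneg (hp₀ y)]
        exact mul_le_mul_of_nonneg_left (hf y) (hp₀ y)
    _ = M := by rw [← sum_mul, hp₁, one_mul]

lemma abs_pairExpect_le {p : Y → ℝ} {f : Y → Y → ℝ} {M : ℝ} (hp₀ : ∀ y, 0 ≤ p y)
    (hp₁ : ∑ y, p y = 1) (hf : ∀ y₁ y₂, |f y₁ y₂| ≤ M) : |pairExpect p f| ≤ M := by
  have : pairExpect p f = ∑ y₁, p y₁ * ∑ y₂, p y₂ * f y₁ y₂ := by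
    simp only [pairExpect, mul_sum, mul_assoc]
  rw [this]
  exact abs_sum_mul_le_of_sum_eq_one hp₀ hp₁ fun y₁ =>
    abs_sum_mul_le_of_sum_eq_one hp₀ hp₁ (hf y₁)

variable [Nonempty Y]

lemma sum_exp_pos (v : Y → ℝ) : 0 < ∑ y, exp (v y) :=
  sum_pos (fun _ _ => exp_pos _) univ_nonempty

lemma softmax_pos (v : Y → ℝ) (y : Y) : 0 < softmax v y :=
  div_pos (exp_pos _) (sum_exp_pos v)

lemma sum_softmax (v : Y → ℝ) : ∑ y, softmax v y = 1 := by
  simp only [softmax, ← sum_div, div_self (sum_exp_pos v).ne']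

lemma softmax_div_softmax (v : Y → ℝ) (y₁ y₂ : Y) :
    softmax v y₁ / softmax v y₂ = exp (v y₁ - v y₂) := by
  have := (sum_exp_pos v).ne'
  rw [softmax, softmax, exp_sub]
  field_simp

lemma contDiff_softmax {n : WithTop ℕ∞} (y : Y) :
    ContDiff ℝ n fun v : Y → ℝ => softmax v y := by
  unfold softmax
  fun_prop (disch := exact fun v => (sum_exp_pos v).ne')

lemma hasDerivAt_softmax_line (a w : Y → ℝ) (y : Y) (t : ℝ) :
    HasDerivAt (fun t => softmax (a + t • w) y)
      (softmax (a + t • w) y * (w y - ∑ y', softmax (a + t • w) y' * w y')) t := by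
  have he : ∀ y, HasDerivAt (fun t => exp (a y + t * w y)) (exp (a y + t * w y) * w y) t :=
    fun y => ((hasDerivAt_mul_const (w y)).const_add (a y)).exp.congr_deriv (by ring)
  have hZ := (sum_exp_pos (a + t • w)).ne'
  simp only [softmax, Pi.add_apply, Pi.smul_apply, smul_eq_mul] at hZ ⊢
  refine ((he y).div (HasDerivAt.fun_sum fun y _ => he y) hZ).congr_deriv ?_
  simp only [div_mul_eq_mul_div, ← sum_div]
  field_simp

lemma hasDerivAt_softmax_mean (a w : Y → ℝ) (t : ℝ) :
    HasDerivAt (fun t => ∑ y, softmax (a + t • w) y * w y)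
      (∑ y, softmax (a + t • w) y * ((w y - ∑ y', softmax (a + t • w) y' * w y') * w y)) t :=
  (HasDerivAt.fun_sum fun y _ => (hasDerivAt_softmax_line a w y t).mul_const (w y)).congr_deriv
    (sum_congr rfl fun _ _ => by ring)

lemma hasDerivAt_pairExpect_softmax_line (a w : Y → ℝ) {f f' : Y → Y → ℝ → ℝ} {t : ℝ}
    (hf : ∀ y₁ y₂, HasDerivAt (f y₁ y₂) (f' y₁ y₂ t) t) :
    HasDerivAt (fun t => pairExpect (softmax (a + t • w)) fun y₁ y₂ => f y₁ y₂ t)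
      (pairExpect (softmax (a + t • w)) fun y₁ y₂ =>
        (w y₁ + w y₂ - 2 * ∑ y, softmax (a + t • w) y * w y) * f y₁ y₂ t + f' y₁ y₂ t) t := by
  unfold pairExpect
  refine HasDerivAt.fun_sum fun y₁ _ => HasDerivAt.fun_sum fun y₂ _ =>
    ((hasDerivAt_softmax_line a w y₁ t).mul (hasDerivAt_softmax_line a w y₂ t)).mul (hf y₁ y₂)
      |>.congr_deriv ?_
  simp only [Pi.mul_apply]
  ring

lemma exists_second_deriv_pairExpect_softmax_line (a w : Y → ℝ) {f f₁ : Y → Y → ℝ → ℝ}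
    {f₂ : Y → Y → ℝ} {A B C M : ℝ}
    (hf : ∀ y₁ y₂ t, HasDerivAt (f y₁ y₂) (f₁ y₁ y₂ t) t)
    (hf₁ : ∀ y₁ y₂, HasDerivAt (f₁ y₁ y₂) (f₂ y₁ y₂) 0)
    (hA : ∀ y₁ y₂, |f y₁ y₂ 0| ≤ A) (hB : ∀ y₁ y₂, |f₁ y₁ y₂ 0| ≤ B)
    (hC : ∀ y₁ y₂, |f₂ y₁ y₂| ≤ C) (hw : ∀ y, |w y| ≤ M) :
    ∃ φ₁ : ℝ → ℝ, ∃ c : ℝ,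
      (∀ t, HasDerivAt (fun t => pairExpect (softmax (a + t • w)) fun y₁ y₂ => f y₁ y₂ t)
        (φ₁ t) t) ∧
      HasDerivAt φ₁ c 0 ∧ |c| ≤ 20 * M ^ 2 * A + 8 * M * B + C := by
  set m := fun t : ℝ => ∑ y, softmax (a + t • w) y * w y
  set m' := ∑ y, softmax (a + (0 : ℝ) • w) y * ((w y - m 0) * w y)
  set k := fun t y₁ y₂ => w y₁ + w y₂ - 2 * m t
  have hk : ∀ y₁ y₂, HasDerivAt (fun t => k t y₁ y₂) (-2 * m') 0 := fun y₁ y₂ =>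
    ((hasDerivAt_softmax_mean a w 0).const_mul 2).const_sub _ |>.congr_deriv (by rw [neg_mul])
  have hm : ∀ t, |m t| ≤ M := fun t =>
    abs_sum_mul_le_of_sum_eq_one (fun y => (softmax_pos _ y).le) (sum_softmax _) hw
  have hkM : ∀ y₁ y₂, |k 0 y₁ y₂| ≤ 4 * M := fun y₁ y₂ => by
    have h₁ := abs_sub (w y₁ + w y₂) (2 * m 0)
    have h₂ := abs_add_le (w y₁) (w y₂)
    rw [abs_mul, abs_two] at h₁
    linarith [hw y₁, hw y₂, hm 0]
  have hm' : |m'| ≤ 2 * M ^ 2 := by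
    refine abs_sum_mul_le_of_sum_eq_one (fun y => (softmax_pos _ y).le) (sum_softmax _)
      fun y => ?_
    rw [abs_mul]
    have := abs_sub (w y) (m 0)
    nlinarith [hw y, hm 0, abs_nonneg (w y), abs_nonneg (w y - m 0)]
  have hM : 0 ≤ M := (abs_nonneg _).trans (hw (Classical.arbitrary Y))
  have key : ∀ κ g g₁ g₂ : ℝ, |κ| ≤ 4 * M → |g| ≤ A → |g₁| ≤ B → |g₂| ≤ C →
      |κ * (κ * g + g₁) + (-2 * m' * g + κ * g₁ + g₂)| ≤ 20 * M ^ 2 * A + 8 * M * B + C := by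
    intro κ g g₁ g₂ hκ hg hg₁ hg₂
    calc |κ * (κ * g + g₁) + (-2 * m' * g + κ * g₁ + g₂)|
        ≤ |κ| * (|κ| * |g| + |g₁|) + (2 * |m'| * |g| + |κ| * |g₁| + |g₂|) := by
          have h₁ := abs_add_le (κ * g) g₁
          have h₂ := abs_add_le (-2 * m' * g + κ * g₁) g₂
          have h₃ := abs_add_le (-2 * m' * g) (κ * g₁)
          have h₄ := abs_add_le (κ * (κ * g + g₁)) (-2 * m' * g + κ * g₁ + g₂)
          simp only [abs_mul, abs_neg, abs_two] at h₁ h₂ h₃ h₄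
          nlinarith [abs_nonneg κ]
      _ ≤ 4 * M * (4 * M * A + B) + (2 * (2 * M ^ 2) * A + 4 * M * B + C) := by gcongr
      _ = 20 * M ^ 2 * A + 8 * M * B + C := by ring
  refine ⟨_, _, fun t => hasDerivAt_pairExpect_softmax_line a w (hf · · t),
    hasDerivAt_pairExpect_softmax_line a w (f' := fun y₁ y₂ _ =>
      -2 * m' * f y₁ y₂ 0 + k 0 y₁ y₂ * f₁ y₁ y₂ 0 + f₂ y₁ y₂)
      fun y₁ y₂ => ((hk y₁ y₂).mul (hf y₁ y₂ 0)).add (hf₁ y₁ y₂) |>.congr_deriv (by ring), ?_⟩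
  exact abs_pairExpect_le (fun y => (softmax_pos _ y).le) (sum_softmax _) fun y₁ y₂ =>
    key _ _ _ _ (hkM y₁ y₂) (hA y₁ y₂) (hB y₁ y₂) (hC y₁ y₂)

end Softmax

noncomputable def comparisonLoss {Y : Type*} [Fintype Y] (τ : ℝ) (s : Y → Y → ℝ) (a : Y → ℝ) :
    ℝ :=
  pairExpect (softmax a) fun y₁ y₂ => klSigmoid (s y₁ y₂) ((a y₁ - a y₂) / τ)

noncomputable def praLoss {X Y : Type*} [Fintype X] [Fintype Y] (τ : ℝ) (D : X → ℝ)
    (s : X → Y → Y → ℝ) (θ : X × Y → ℝ) : ℝ :=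
  ∑ x, D x * comparisonLoss τ (s x) fun y => θ (x, y)

lemma exists_second_deriv_comparisonLoss_line {Y : Type*} [Fintype Y] [Nonempty Y] {τ : ℝ}
    (hτ : 0 < τ) {s : Y → Y → ℝ} (hs₀ : ∀ y₁ y₂, 0 ≤ s y₁ y₂) (hs₁ : ∀ y₁ y₂, s y₁ y₂ ≤ 1)
    {a w : Y → ℝ} {d ε M : ℝ} (hdiam : ∀ y₁ y₂, |a y₁ - a y₂| ≤ d)
    (hclose : ∀ y₁ y₂, |s y₁ y₂ - sigmoid ((a y₁ - a y₂) / τ)| ≤ ε) (hw : ∀ y, |w y| ≤ M) :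
    ∃ φ₁ : ℝ → ℝ, ∃ c : ℝ,
      (∀ t, HasDerivAt (fun t => comparisonLoss τ s (a + t • w)) (φ₁ t) t) ∧
      HasDerivAt φ₁ c 0 ∧ |c| ≤ (20 * softplus (d / τ) + 16 * ε / τ + 1 / τ ^ 2) * M ^ 2 := by
  set u := fun y₁ y₂ => (w y₁ - w y₂) / τ
  set v := fun y₁ y₂ (t : ℝ) => ((a + t • w) y₁ - (a + t • w) y₂) / τ
  have hv : ∀ y₁ y₂ t, HasDerivAt (v y₁ y₂) (u y₁ y₂) t := fun y₁ y₂ t => by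
    have : v y₁ y₂ = fun t => (a y₁ - a y₂) / τ + t * u y₁ y₂ := by
      ext t
      simp only [v, u, Pi.add_apply, Pi.smul_apply, smul_eq_mul]
      ring
    rw [this]
    exact (hasDerivAt_mul_const _).const_add _
  have hv₀ : ∀ y₁ y₂, v y₁ y₂ 0 = (a y₁ - a y₂) / τ := fun y₁ y₂ => by simp [v]
  have hu : ∀ y₁ y₂, |u y₁ y₂| ≤ 2 * M / τ := fun y₁ y₂ => by
    rw [abs_div, abs_of_pos hτ]
    gcongr
    linarith [abs_sub (w y₁) (w y₂), hw y₁, hw y₂]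
  have hf : ∀ y₁ y₂ t, HasDerivAt (fun t => klSigmoid (s y₁ y₂) (v y₁ y₂ t))
      ((sigmoid (v y₁ y₂ t) - s y₁ y₂) * u y₁ y₂) t := fun y₁ y₂ t =>
    (hasDerivAt_klSigmoid _ _).comp t (hv y₁ y₂ t)
  have hf₁ : ∀ y₁ y₂, HasDerivAt (fun t => (sigmoid (v y₁ y₂ t) - s y₁ y₂) * u y₁ y₂)
      (sigmoid (v y₁ y₂ 0) * (1 - sigmoid (v y₁ y₂ 0)) * u y₁ y₂ * u y₁ y₂) 0 := fun y₁ y₂ =>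
    (((hasDerivAt_sigmoid _).comp 0 (hv y₁ y₂ 0)).sub_const _).mul_const _
      |>.congr_deriv (by ring)
  have hA : ∀ y₁ y₂, |klSigmoid (s y₁ y₂) (v y₁ y₂ 0)| ≤ softplus (d / τ) := fun y₁ y₂ => by
    refine (abs_klSigmoid_le (hs₀ y₁ y₂) (hs₁ y₁ y₂) _).trans (softplus_mono ?_)
    rw [hv₀, abs_div, abs_of_pos hτ]
    exact div_le_div_of_nonneg_right (hdiam y₁ y₂) hτ.le
  have hB : ∀ y₁ y₂, |(sigmoid (v y₁ y₂ 0) - s y₁ y₂) * u y₁ y₂| ≤ ε * (2 * M / τ) :=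
    fun y₁ y₂ => by
      rw [abs_mul, hv₀, abs_sub_comm]
      exact mul_le_mul (hclose y₁ y₂) (hu y₁ y₂) (abs_nonneg _)
        ((abs_nonneg _).trans (hclose y₁ y₂))
  have hC : ∀ y₁ y₂, |sigmoid (v y₁ y₂ 0) * (1 - sigmoid (v y₁ y₂ 0)) * u y₁ y₂ * u y₁ y₂| ≤
      1 / 4 * (2 * M / τ) ^ 2 := fun y₁ y₂ => by
    have h₀ : 0 ≤ sigmoid (v y₁ y₂ 0) * (1 - sigmoid (v y₁ y₂ 0)) :=
      mul_nonneg (sigmoid_nonneg _) (sub_nonneg.2 (sigmoid_le_one _))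
    rw [mul_assoc, abs_mul, abs_of_nonneg h₀, abs_mul, ← sq]
    gcongr
    · exact sigmoid_mul_one_sub_le _
    · exact hu y₁ y₂
  obtain ⟨φ₁, c, hφ₁, hc, hcM⟩ :=
    exists_second_deriv_pairExpect_softmax_line a w hf hf₁ hA hB hC hw
  refine ⟨φ₁, c, hφ₁, hc, hcM.trans_eq ?_⟩
  field_simp
  ring

section PraLoss

variable {X Y : Type*} [Fintype X] [Fintype Y] [Nonempty Y]

lemma contDiff_praLoss {n : WithTop ℕ∞} (τ : ℝ) (D : X → ℝ) (s : X → Y → Y → ℝ) :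
    ContDiff ℝ n (praLoss τ D s) := by
  have hrow : ∀ x, ContDiff ℝ n fun θ : X × Y → ℝ => fun y => θ (x, y) := fun x => by fun_prop
  unfold praLoss comparisonLoss pairExpect
  refine ContDiff.sum fun x _ => contDiff_const.mul <| ContDiff.sum fun y₁ _ =>
    ContDiff.sum fun y₂ _ => ?_
  exact (((contDiff_softmax y₁).comp (hrow x)).mul ((contDiff_softmax y₂).comp (hrow x))).mul
    ((contDiff_klSigmoid _).comp (by fun_prop))

lemma abs_fderiv_fderiv_praLoss_le {τ : ℝ} (hτ : 0 < τ) {D : X → ℝ} (hD₀ : ∀ x, 0 ≤ D x)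
    (hD₁ : ∑ x, D x = 1) {s : X → Y → Y → ℝ} (hs₀ : ∀ x y₁ y₂, 0 ≤ s x y₁ y₂)
    (hs₁ : ∀ x y₁ y₂, s x y₁ y₂ ≤ 1) {θ : X × Y → ℝ} {d ε : ℝ}
    (hdiam : ∀ x y₁ y₂, |θ (x, y₁) - θ (x, y₂)| ≤ d)
    (hclose : ∀ x y₁ y₂, |s x y₁ y₂ - sigmoid ((θ (x, y₁) - θ (x, y₂)) / τ)| ≤ ε)
    (z : X × Y → ℝ) :
    |fderiv ℝ (fderiv ℝ (praLoss τ D s)) θ z z| ≤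
      (20 * softplus (d / τ) + 16 * ε / τ + 1 / τ ^ 2) * ∑ p, z p ^ 2 := by
  have hS : 0 ≤ ∑ p, z p ^ 2 := sum_nonneg fun p _ => sq_nonneg (z p)
  have hz : ∀ x y, |z (x, y)| ≤ √(∑ p, z p ^ 2) := fun x y =>
    abs_le_sqrt (single_le_sum (fun p _ => sq_nonneg (z p)) (mem_univ (x, y)))
  choose φ₁ c hφ₁ hc hcM using fun x => exists_second_deriv_comparisonLoss_line hτ (hs₀ x)
    (hs₁ x) (hdiam x) (hclose x) (hz x)
  rw [fderiv_fderiv_apply_eq_of_hasDerivAt_line (contDiff_praLoss τ D s)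
    (fun t => HasDerivAt.fun_sum fun x _ => (hφ₁ x t).const_mul (D x))
    (HasDerivAt.fun_sum fun x _ => (hc x).const_mul (D x))]
  exact (abs_sum_mul_le_of_sum_eq_one hD₀ hD₁ hcM).trans_eq (by rw [sq_sqrt hS])

end PraLoss

theorem pra_loss_smooth_general
    {X Y : Type*} [Fintype X] [Fintype Y] [Nonempty Y]
    (r : X → Y → ℝ) (τ : ℝ) (hτ : 0 < τ)
    (D : X → ℝ) (hD0 : ∀ x, 0 ≤ D x) (hD1 : ∑ x : X, D x = 1)
    (σ : ℝ → ℝ) (hσ : ∀ t, σ t = (1 + Real.exp (-t))⁻¹)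
    (pstar : X → Y → Y → ℝ)
    (hpstar : ∀ x y₁ y₂, pstar x y₁ y₂ = σ (r x y₁ - r x y₂))
    (πθ : (X × Y → ℝ) → X → Y → ℝ)
    (hπθ : ∀ θ x y, πθ θ x y = Real.exp (θ (x, y)) / ∑ y' : Y, Real.exp (θ (x, y')))
    (hθfun : (X × Y → ℝ) → X → Y → Y → ℝ)
    (hhθfun : ∀ θ x y₁ y₂, hθfun θ x y₁ y₂ =
      (1 / τ) * Real.log (πθ θ x y₁ / πθ θ x y₂))
    (pθ : (X × Y → ℝ) → X → Y → Y → ℝ)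
    (hpθ : ∀ θ x y₁ y₂, pθ θ x y₁ y₂ = σ (hθfun θ x y₁ y₂))
    (L : (X × Y → ℝ) → ℝ)
    (hL : ∀ θ, L θ = ∑ x : X, D x * ∑ y₁ : Y, ∑ y₂ : Y,
      πθ θ x y₁ * πθ θ x y₂ *
        (pstar x y₁ y₂ * Real.log (pstar x y₁ y₂ / pθ θ x y₁ y₂) +
         (1 - pstar x y₁ y₂) *
           Real.log ((1 - pstar x y₁ y₂) / (1 - pθ θ x y₁ y₂))))
    (d ε₃ : ℝ)
    (θ : X × Y → ℝ)
    (hθdiam : ∀ x₁ x₂ y₁ y₂, |θ (x₁, y₁) - θ (x₂, y₂)| ≤ d)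
    (hθprob : ∀ x y₁ y₂, |pstar x y₁ y₂ - pθ θ x y₁ y₂| ≤ ε₃) :
    ∀ z : X × Y → ℝ,
      |fderiv ℝ (fderiv ℝ L) θ z z| ≤
        (20 * Real.log (1 + Real.exp (d / τ)) + 16 * ε₃ / τ + 4 / τ ^ 2 +
          16 * Real.log 2) * ∑ p : X × Y, z p ^ 2 := by
  intro z
  have hsig : σ = sigmoid := funext hσ
  have hπ : ∀ θ x y, πθ θ x y = softmax (fun y => θ (x, y)) y := hπθ
  have hp : ∀ θ x y₁ y₂, pθ θ x y₁ y₂ = sigmoid ((θ (x, y₁) - θ (x, y₂)) / τ) :=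
    fun θ x y₁ y₂ => by
      rw [hpθ, hsig, hhθfun, hπ, hπ, softmax_div_softmax, log_exp, one_div_mul_eq_div]
  have hL' : L = praLoss τ D pstar := funext fun θ => by
    simp only [hL, hπ, hp]
    rfl
  have hs : ∀ x y₁ y₂, pstar x y₁ y₂ = sigmoid (r x y₁ - r x y₂) := by
    simpa only [hsig] using hpstar
  have hbound := abs_fderiv_fderiv_praLoss_le hτ hD0 hD1
    (fun x y₁ y₂ => hs x y₁ y₂ ▸ sigmoid_nonneg _) (fun x y₁ y₂ => hs x y₁ y₂ ▸ sigmoid_le_one _)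
    (fun x => hθdiam x x) (fun x y₁ y₂ => hp θ x y₁ y₂ ▸ hθprob x y₁ y₂) z
  rw [hL']
  refine hbound.trans (mul_le_mul_of_nonneg_right ?_ (sum_nonneg fun p _ => sq_nonneg (z p)))
  have hτ₂ : 1 / τ ^ 2 ≤ 4 / τ ^ 2 := by gcongr; norm_num
  have hsp := softplus_nonneg (d / τ)
  rw [softplus] at hsp ⊢
  linarith [log_nonneg one_le_two]

/-- The PRA loss of the softmax-parametrized policy under the
Bradley–Terry comparison model satisfies, at every θ whose logits have diameter at
most d and whose model comparison probabilities are within ε₃ of the true ones, the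
second-derivative bound
|D²L(θ)(z,z)| ≤ (20·log(1 + e^{d/τ}) + 16ε₃/τ + 4/τ² + 16·log 2)·Σ_{x,y} z(x,y)². -/
theorem pra_loss_smooth
    {X Y : Type*} [Fintype X] [Fintype Y] [Nonempty X] [Nonempty Y]
    (r : X → Y → ℝ) (τ : ℝ) (hτ : 0 < τ)
    (D : X → ℝ) (hD0 : ∀ x, 0 ≤ D x) (hD1 : ∑ x : X, D x = 1)
    (σ : ℝ → ℝ) (hσ : ∀ t, σ t = (1 + Real.exp (-t))⁻¹)
    (pstar : X → Y → Y → ℝ)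
    (hpstar : ∀ x y₁ y₂, pstar x y₁ y₂ = σ (r x y₁ - r x y₂))
    (πθ : (X × Y → ℝ) → X → Y → ℝ)
    (hπθ : ∀ θ x y, πθ θ x y = Real.exp (θ (x, y)) / ∑ y' : Y, Real.exp (θ (x, y')))
    (hθfun : (X × Y → ℝ) → X → Y → Y → ℝ)
    (hhθfun : ∀ θ x y₁ y₂, hθfun θ x y₁ y₂ =
      (1 / τ) * Real.log (πθ θ x y₁ / πθ θ x y₂))
    (pθ : (X × Y → ℝ) → X → Y → Y → ℝ)
    (hpθ : ∀ θ x y₁ y₂, pθ θ x y₁ y₂ = σ (hθfun θ x y₁ y₂))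
    (L : (X × Y → ℝ) → ℝ)
    (hL : ∀ θ, L θ = ∑ x : X, D x * ∑ y₁ : Y, ∑ y₂ : Y,
      πθ θ x y₁ * πθ θ x y₂ *
        (pstar x y₁ y₂ * Real.log (pstar x y₁ y₂ / pθ θ x y₁ y₂) +
         (1 - pstar x y₁ y₂) *
           Real.log ((1 - pstar x y₁ y₂) / (1 - pθ θ x y₁ y₂))))
    (d ε₃ : ℝ) (hd : 0 ≤ d) (hε₃ : 0 ≤ ε₃)
    (θ : X × Y → ℝ)
    (hθdiam : ∀ x₁ x₂ y₁ y₂, |θ (x₁, y₁) - θ (x₂, y₂)| ≤ d)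
    (hθprob : ∀ x y₁ y₂, |pstar x y₁ y₂ - pθ θ x y₁ y₂| ≤ ε₃) :
    ∀ z : X × Y → ℝ,
      |fderiv ℝ (fderiv ℝ L) θ z z| ≤
        (20 * Real.log (1 + Real.exp (d / τ)) + 16 * ε₃ / τ + 4 / τ ^ 2 +
          16 * Real.log 2) * ∑ p : X × Y, z p ^ 2 :=
  pra_loss_smooth_general r τ hτ D hD0 hD1 σ hσ pstar hpstar πθ hπθ hθfun hhθfun pθ hpθ L hL d ε₃ θ
    hθdiam hθprob
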